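/- Fix ε > 0, τ ∈ ℝ, T ∈ ℕ, and two sequences a, a′ : {1, …, T} → ℝ with |a_t − a′_t| ≤ 1 for every t. Sample τ̂ = τ + Lap(2/ε) and, independently, fresh noises v_t ~ Lap(4/ε) independently across t; define Halt(a) to be the smallest t ≤ T with a_t + v_t ≥ τ̂, and ⊥ if no such t exists. Then for every subset S ⊆ {1, …, T} ∪ {⊥}, Pr[Halt(a) ∈ S] ≤ exp(ε)·Pr[Halt(a′) ∈ S]. -/

import Mathlib

/-!
Fix an output `o` and shift the noise: the threshold noise by `1` and, if `o = some t`, the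
query noise at `t` by `2`. Because the queries move by at most `1`, this shift maps every noise
sample on which `Halt a` outputs `o` to one on which `Halt a'` outputs `o`. A Laplace density of
scale `b` changes by at most the factor `exp (|s| / b)` under a shift by `s`, so the shift
inflates the noise distribution by at most `exp (ε / 2) · exp (ε / 2)`. Summing over `o ∈ S`
gives the bound.
-/

open MeasureTheory ProbabilityTheory Classical

/-- The Laplace distribution on ℝ with scale `b`: density `x ↦ (1/(2b)) exp (-|x|/b)`
with respect to Lebesgue measure. -/
noncomputable def laplace (b : ℝ) : Measure ℝ :=
  MeasureTheory.volume.withDensity fun x => ENNReal.ofReal ((1 / (2 * b)) * Real.exp (-|x| / b))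

/-- The output space `{1, …, T} ∪ {⊥}` is modelled as `Option (Fin T)` with the
discrete σ-algebra. -/
instance (T : ℕ) : MeasurableSpace (Option (Fin T)) := ⊤

open scoped ENNReal

namespace MeasureTheory.Measure

theorem prod_le_smul_prod {α β : Type*} [MeasurableSpace α] [MeasurableSpace β]
    {μ₁ μ₂ : Measure α} {ν₁ ν₂ : Measure β} [SFinite ν₂] {c d : ℝ≥0∞}
    (hμ : μ₁ ≤ c • μ₂) (hν : ν₁ ≤ d • ν₂) :
    μ₁.prod ν₁ ≤ (c * d) • μ₂.prod ν₂ :=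
  calc μ₁.prod ν₁ ≤ (c • μ₂).prod (d • ν₂) := prod_mono hμ hν
    _ = (c * d) • μ₂.prod ν₂ := by rw [prod_smul_left, prod_smul_right, smul_smul]

theorem pi_le_smul_pi {n : ℕ} {α : Fin n → Type*} [∀ i, MeasurableSpace (α i)]
    {μ ν : ∀ i, Measure (α i)} [∀ i, SigmaFinite (μ i)] [∀ i, SigmaFinite (ν i)]
    {c : Fin n → ℝ≥0∞} (h : ∀ i, ν i ≤ c i • μ i) :
    Measure.pi ν ≤ (∏ i, c i) • Measure.pi μ := by
  induction n with
  | zero => rw [pi_of_empty ν, pi_of_empty μ]; simp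
  | succ n ih =>
    let e := MeasurableEquiv.piFinSuccAbove α 0
    rw [← ((measurePreserving_piFinSuccAbove ν 0).symm e).map_eq,
      ← ((measurePreserving_piFinSuccAbove μ 0).symm e).map_eq, ← Measure.map_smul,
      Fin.prod_univ_succ]
    refine map_mono ?_ e.symm.measurable
    exact prod_le_smul_prod (h 0) (ih fun i => h i.succ)

theorem map_add_right_withDensity_le {G : Type*} [MeasurableSpace G] [AddGroup G]
    [MeasurableAdd G] (μ : Measure G) [μ.IsAddRightInvariant] {f : G → ℝ≥0∞}
    (hf : Measurable f) (s : G) {c : ℝ≥0∞} (hc : ∀ x, f x ≤ c * f (x + s)) :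
    (μ.withDensity f).map (· + s) ≤ c • μ.withDensity f := by
  refine le_iff.mpr fun A hA => ?_
  have hs : Measurable (· + s : G → G) := measurable_add_const s
  rw [map_apply hs hA, withDensity_apply _ (hs hA), smul_apply, withDensity_apply _ hA,
    smul_eq_mul]
  calc ∫⁻ x in (· + s) ⁻¹' A, f x ∂μ
      ≤ ∫⁻ x in (· + s) ⁻¹' A, c * f (x + s) ∂μ := lintegral_mono fun x => hc x
    _ = c * ∫⁻ y in A, f y ∂μ.map (· + s) := by
      rw [lintegral_const_mul c (f := fun x => f (x + s)) (hf.comp hs), setLIntegral_map hA hf hs]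
    _ = c * ∫⁻ y in A, f y ∂μ := by rw [map_add_right_eq_self]

theorem le_smul_of_forall_singleton_le {α : Type*} [MeasurableSpace α]
    [Countable α] [MeasurableSingletonClass α] {μ ν : Measure α} {c : ℝ≥0∞}
    (h : ∀ a, μ {a} ≤ c * ν {a}) : μ ≤ c • ν := by
  refine le_iff'.mpr fun S => ?_
  have hsum (ρ : Measure α) : ∑' a : S, ρ {a.1} = ρ S := by
    simpa using tsum_measure_preimage_singleton S.to_countable (μ := ρ) (f := id)
      fun a _ => measurableSet_singleton a
  rw [smul_apply, smul_eq_mul, ← hsum μ, ← hsum ν, ← ENNReal.tsum_mul_left]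
  exact ENNReal.tsum_le_tsum fun a => h a

end MeasureTheory.Measure

instance (b : ℝ) : SigmaFinite (laplace b) := by
  unfold laplace; infer_instance

theorem laplace_map_add_le {b : ℝ} (hb : 0 < b) (s : ℝ) :
    (laplace b).map (· + s) ≤ ENNReal.ofReal (Real.exp (|s| / b)) • laplace b := by
  refine Measure.map_add_right_withDensity_le _ (by fun_prop) s fun x => ?_
  rw [← ENNReal.ofReal_mul (Real.exp_nonneg _)]
  refine ENNReal.ofReal_le_ofReal ?_
  have htri : -|x| / b ≤ |s| / b + -|x + s| / b := by
    rw [← add_div]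
    exact div_le_div_of_nonneg_right (by linarith [abs_add_le x s]) hb.le
  calc 1 / (2 * b) * Real.exp (-|x| / b)
      ≤ 1 / (2 * b) * Real.exp (|s| / b + -|x + s| / b) := by gcongr
    _ = Real.exp (|s| / b) * (1 / (2 * b) * Real.exp (-|x + s| / b)) := by
      rw [Real.exp_add]; ring

theorem pi_laplace_map_add_le {n : ℕ} {b : ℝ} (hb : 0 < b) (w : Fin n → ℝ) :
    (Measure.pi fun _ : Fin n => laplace b).map (· + w)
      ≤ ENNReal.ofReal (Real.exp ((∑ i, |w i|) / b)) • Measure.pi fun _ => laplace b := by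
  have : ∀ i, SigmaFinite ((laplace b).map (· + w i)) := fun i =>
    (MeasurableEquiv.addRight (w i)).sigmaFinite_map
  change (Measure.pi fun _ : Fin n => laplace b).map (fun x i => x i + w i) ≤ _
  rw [Measure.pi_map_pi fun i => (measurable_add_const (w i)).aemeasurable, Finset.sum_div,
    Real.exp_sum, ENNReal.ofReal_prod_of_nonneg fun i _ => Real.exp_nonneg _]
  exact Measure.pi_le_smul_pi fun i => laplace_map_add_le hb (w i)

theorem laplace_prod_pi_map_add_le {n : ℕ} {b₁ b₂ : ℝ} (hb₁ : 0 < b₁) (hb₂ : 0 < b₂)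
    (s : ℝ) (w : Fin n → ℝ) :
    ((laplace b₁).prod (Measure.pi fun _ : Fin n => laplace b₂)).map
        (Prod.map (· + s) (· + w))
      ≤ ENNReal.ofReal (Real.exp (|s| / b₁ + (∑ i, |w i|) / b₂)) •
        (laplace b₁).prod (Measure.pi fun _ : Fin n => laplace b₂) := by
  rw [← Measure.map_prod_map _ _ (measurable_add_const s) (measurable_add_const w),
    Real.exp_add, ENNReal.ofReal_mul (Real.exp_nonneg _)]
  exact Measure.prod_le_smul_prod (laplace_map_add_le hb₁ s) (pi_laplace_map_add_le hb₂ w)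

section FirstAbove

variable {n : ℕ}

noncomputable def firstAbove (x : Fin n → ℝ) (θ : ℝ) : Option (Fin n) :=
  Fin.find? fun t => decide (x t ≥ θ)

theorem firstAbove_eq_none_iff {x : Fin n → ℝ} {θ : ℝ} :
    firstAbove x θ = none ↔ ∀ t, x t < θ := by
  simp [firstAbove]

theorem firstAbove_eq_some_iff {x : Fin n → ℝ} {θ : ℝ} {i : Fin n} :
    firstAbove x θ = some i ↔ θ ≤ x i ∧ ∀ j < i, x j < θ := by
  simp [firstAbove]

theorem measurable_firstAbove :
    Measurable fun p : (Fin n → ℝ) × ℝ => firstAbove p.1 p.2 := by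
  have hle (t : Fin n) : MeasurableSet {p : (Fin n → ℝ) × ℝ | p.2 ≤ p.1 t} :=
    measurableSet_le measurable_snd ((measurable_pi_apply t).comp measurable_fst)
  have hdec : Measurable fun (p : (Fin n → ℝ) × ℝ) (t : Fin n) => decide (p.1 t ≥ p.2) :=
    measurable_pi_lambda _ fun t => measurable_to_bool <| by
      convert hle t using 1
      ext; simp
  exact (measurable_of_countable fun q : Fin n → Bool => Fin.find? q).comp hdec

def boostAt (o : Option (Fin n)) (c : ℝ) : Fin n → ℝ :=
  fun t => if o = some t then c else 0

theorem sum_abs_boostAt_le (o : Option (Fin n)) (c : ℝ) : ∑ t, |boostAt o c t| ≤ |c| := by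
  cases o with
  | none => simp [boostAt]
  | some i => simp [boostAt, apply_ite abs]

theorem firstAbove_add_boostAt {x x' : Fin n → ℝ} {Δ θ : ℝ} (h : ∀ t, |x t - x' t| ≤ Δ)
    {o : Option (Fin n)} (ho : firstAbove x θ = o) :
    firstAbove (x' + boostAt o (2 * Δ)) (θ + Δ) = o := by
  have hclose (t : Fin n) := abs_le.mp (h t)
  subst ho
  cases hx : firstAbove x θ with
  | none =>
    rw [firstAbove_eq_none_iff] at hx ⊢
    intro t
    simp only [Pi.add_apply, boostAt, reduceCtorEq, if_false]
    linarith [hx t, hclose t]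
  | some i =>
    rw [firstAbove_eq_some_iff] at hx ⊢
    refine ⟨?_, fun j hj => ?_⟩
    · simp only [Pi.add_apply, boostAt, if_true]
      linarith [hx.1, hclose i]
    · simp only [Pi.add_apply, boostAt, Option.some.injEq, if_neg hj.ne']
      linarith [hx.2 j hj, hclose j]

end FirstAbove

/-- `Halt a` samples `τ̂ = τ + Lap(2/ε)` and independent fresh noises `v t ~ Lap(4/ε)`,
and outputs the smallest `t` with `a t + v t ≥ τ̂`, or `⊥` (`none`) if there is none.  If
`|a t − a' t| ≤ 1` for all `t`, then for every set `S` of outcomes,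
`Pr[Halt a ∈ S] ≤ exp ε · Pr[Halt a' ∈ S]`. -/
theorem sparse_vector_halting_dp
    (ε : ℝ) (hε : 0 < ε) (τ : ℝ) (T : ℕ) (a a' : Fin T → ℝ)
    (hsens : ∀ t, |a t - a' t| ≤ 1)
    (Halt : (Fin T → ℝ) → Measure (Option (Fin T)))
    (hHalt : ∀ b : Fin T → ℝ, Halt b =
      Measure.map
        (fun ω : ℝ × (Fin T → ℝ) => Fin.find? fun t => decide (b t + ω.2 t ≥ τ + ω.1))
        ((laplace (2 / ε)).prod (Measure.pi fun _ : Fin T => laplace (4 / ε))))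
    (S : Set (Option (Fin T))) :
    Halt a S ≤ ENNReal.ofReal (Real.exp ε) * Halt a' S := by
  set μ := (laplace (2 / ε)).prod (Measure.pi fun _ : Fin T => laplace (4 / ε))
  let halt (b : Fin T → ℝ) (ω : ℝ × (Fin T → ℝ)) : Option (Fin T) :=
    firstAbove (b + ω.2) (τ + ω.1)
  have hhalt (b : Fin T → ℝ) : Measurable (halt b) :=
    measurable_firstAbove.comp ((measurable_const.add measurable_snd).prodMk
      (measurable_const.add measurable_fst))
  have hHalt' (b : Fin T → ℝ) : Halt b = μ.map (halt b) := hHalt b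
  suffices Halt a ≤ ENNReal.ofReal (Real.exp ε) • Halt a' from Measure.le_iff'.mp this S
  refine Measure.le_smul_of_forall_singleton_le fun o => ?_
  let φ : ℝ × (Fin T → ℝ) → ℝ × (Fin T → ℝ) := Prod.map (· + 1) (· + boostAt o 2)
  have hφ : Measurable φ := (measurable_add_const _).prodMap (measurable_add_const _)
  have hrun : halt a ⁻¹' {o} ⊆ φ ⁻¹' (halt a' ⁻¹' {o}) := fun ω hω => by
    simpa [halt, φ, add_assoc] using
      firstAbove_add_boostAt (x' := a' + ω.2) (Δ := 1) (fun t => by simpa using hsens t) hω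
  have hcost : μ.map φ ≤ ENNReal.ofReal (Real.exp ε) • μ := by
    refine (laplace_prod_pi_map_add_le (by positivity) (by positivity) _ _).trans ?_
    have hw : ∑ t, |boostAt o 2 t| ≤ 2 := (sum_abs_boostAt_le o 2).trans_eq abs_two
    gcongr
    rw [abs_one, div_div_eq_mul_div, div_div_eq_mul_div]
    nlinarith
  calc Halt a {o} = μ (halt a ⁻¹' {o}) := by rw [hHalt', Measure.map_apply (hhalt a) trivial]
    _ ≤ μ.map φ (halt a' ⁻¹' {o}) := by
      rw [Measure.map_apply hφ (hhalt a' trivial)]; exact measure_mono hrun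
    _ ≤ ENNReal.ofReal (Real.exp ε) * μ (halt a' ⁻¹' {o}) := Measure.le_iff'.mp hcost _
    _ = ENNReal.ofReal (Real.exp ε) * Halt a' {o} := by
      rw [hHalt', Measure.map_apply (hhalt a') trivial]
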